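/- arXiv:2303.15873 — 4 statements merged into one kernel-verified Lean document; each statement's English description precedes it below -/
import Mathlib

section
/- Let k be a natural number and let G be a finite simple graph with n vertices, where n > 2k^2 - 2. Then there exists a subset S of the vertices of G such that every vertex of G ⊕ S has degree at most n - 1 - k. -/
/-- Subgraph complementation: `scompl G S` complements the subgraph of `G` induced by `S`. -/
def scompl {V : Type*} (G : SimpleGraph V) (S : Set V) : SimpleGraph V where
  Adj x y := x ≠ y ∧ ((x ∈ S ∧ y ∈ S ∧ ¬ G.Adj x y) ∨ (¬(x ∈ S ∧ y ∈ S) ∧ G.Adj x y))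
  symm := ⟨by
    rintro x y ⟨hxy, h⟩
    refine ⟨hxy.symm, ?_⟩
    rcases h with ⟨hx, hy, h⟩ | ⟨h, hadj⟩
    · exact Or.inl ⟨hy, hx, fun h' => h (G.adj_symm h')⟩
    · exact Or.inr ⟨fun hc => h ⟨hc.2, hc.1⟩, G.adj_symm hadj⟩⟩
  loopless := ⟨fun x h => h.1 rfl⟩

/-- Degree of a vertex in a finite simple graph. -/
noncomputable def deg {V : Type*} [Fintype V] (G : SimpleGraph V) (v : V) : ℕ :=
  (G.neighborSet v).ncard

/-- `a, b, c, d` form an induced diamond with `a`, `b` its degree-2 vertices. -/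
def IsDiamond {V : Type*} (G : SimpleGraph V) (a b c d : V) : Prop :=
  a ≠ b ∧ a ≠ c ∧ a ≠ d ∧ b ≠ c ∧ b ≠ d ∧ c ≠ d ∧
  G.Adj a c ∧ G.Adj a d ∧ G.Adj b c ∧ G.Adj b d ∧ G.Adj c d ∧ ¬ G.Adj a b

def DiamondFree {V : Type*} (G : SimpleGraph V) : Prop :=
  ∀ a b c d : V, ¬ IsDiamond G a b c d

/-- `r` together with the `t` distinct leaves `f 0, …, f (t-1)` forms an induced `K_{1,t}`
with center `r`. -/
def IsStar {V : Type*} (G : SimpleGraph V) (t : ℕ) (r : V) (f : Fin t → V) : Prop :=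
  Function.Injective f ∧ (∀ i, G.Adj r (f i)) ∧ ∀ i j, i ≠ j → ¬ G.Adj (f i) (f j)

def StarFree {V : Type*} (G : SimpleGraph V) (t : ℕ) : Prop :=
  ∀ (r : V) (f : Fin t → V), ¬ IsStar G t r f


/-!
Let `nonDeg v` be the number of non-neighbours of `v`. Complementing inside `S` leaves `nonDeg v`
unchanged for `v ∉ S` and turns it into `|S| - 1 + nonDeg v - 2 · #(non-neighbours of v in S)`
for `v ∈ S`, so it suffices to find an `S` containing all vertices with `nonDeg < k` on which this
quantity is at least `k`.

For `|S| = k + j` this is automatic at vertices with `nonDeg < j` or `nonDeg ≥ j + 2k - 1`, so such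
an `S` exists unless fewer than `k + j` vertices lie outside the window `[j, j + 2k - 1)`. The
windows for `j = k` and `j = 3k - 1` are adjacent, so both are that crowded only if
`n + #{nonDeg < k} ≤ 6k - 3`, which `n > 2k² - 2` rules out for `k ≥ 3`. For `k ≤ 2` one takes the
vertices with `nonDeg < k` together with `k` further vertices adjacent to all of them; a union
bound over their non-neighbourhoods shows that there are enough of those.
-/

open Set

namespace SubgraphCompl

variable {V : Type*}

noncomputable def nonDeg (G : SimpleGraph V) (v : V) : ℕ := (Gᶜ.neighborSet v).ncard

noncomputable def nonDegIn (G : SimpleGraph V) (S : Set V) (v : V) : ℕ :=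
  (Gᶜ.neighborSet v ∩ S).ncard

def lowSet (G : SimpleGraph V) (j : ℕ) : Set V := {v | nonDeg G v < j}

def outsideWindow (G : SimpleGraph V) (j g : ℕ) : Set V :=
  {v | nonDeg G v < j ∨ j + g ≤ nonDeg G v}

def completelyJoined (G : SimpleGraph V) (B : Set V) : Set V :=
  {t | t ∉ B ∧ ∀ b ∈ B, ¬ Gᶜ.Adj b t}

theorem lowSet_subset_outsideWindow (G : SimpleGraph V) {k j : ℕ} (g : ℕ) (hkj : k ≤ j) :
    lowSet G k ⊆ outsideWindow G j g :=
  fun _ hv => Or.inl (lt_of_lt_of_le hv hkj)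

theorem nonDegIn_union_le (G : SimpleGraph V) (S T : Set V) (v : V) :
    nonDegIn G (S ∪ T) v ≤ nonDegIn G S v + nonDegIn G T v := by
  rw [nonDegIn, inter_union_distrib_left]
  exact ncard_union_le _ _

theorem nonDeg_scompl_of_notMem (G : SimpleGraph V) {S : Set V} {v : V} (hv : v ∉ S) :
    nonDeg (scompl G S) v = nonDeg G v := by
  unfold nonDeg
  congr 1
  ext w
  simp only [SimpleGraph.mem_neighborSet, SimpleGraph.compl_adj, scompl]
  tauto

section Finite

variable [Finite V]

theorem ncard_neighborSet_inter_add (G : SimpleGraph V) {S : Set V} {v : V} (hv : v ∈ S) :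
    (G.neighborSet v ∩ S).ncard + nonDegIn G S v + 1 = S.ncard := by
  have hdisj : Disjoint (G.neighborSet v ∩ S) (Gᶜ.neighborSet v ∩ S) :=
    (G.compl_neighborSet_disjoint v).mono inter_subset_left inter_subset_left
  rw [nonDegIn, ← ncard_union_eq hdisj, ← union_inter_distrib_right,
    G.neighborSet_union_compl_neighborSet_eq, ← sdiff_eq_compl_inter,
    ncard_sdiff_singleton_add_one hv]

theorem nonDegIn_le_nonDeg (G : SimpleGraph V) (S : Set V) (v : V) :
    nonDegIn G S v ≤ nonDeg G v :=
  ncard_le_ncard inter_subset_left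

theorem nonDegIn_eq_zero (G : SimpleGraph V) {T : Set V} {v : V} (h : ∀ w ∈ T, ¬ Gᶜ.Adj v w) :
    nonDegIn G T v = 0 :=
  (ncard_eq_zero).2 <| eq_empty_iff_forall_notMem.2 fun w hw => h w hw.2 hw.1

theorem nonDeg_scompl_of_mem (G : SimpleGraph V) {S : Set V} {v : V} (hv : v ∈ S) :
    nonDeg (scompl G S) v + 2 * nonDegIn G S v + 1 = S.ncard + nonDeg G v := by
  have hsplit : (scompl G S)ᶜ.neighborSet v = (G.neighborSet v ∩ S) ∪ (Gᶜ.neighborSet v \ S) := by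
    ext w
    simp only [SimpleGraph.mem_neighborSet, SimpleGraph.compl_adj, scompl, mem_union,
      mem_inter_iff, mem_sdiff]
    by_cases hw : w ∈ S
    · have : G.Adj v w → v ≠ w := G.ne_of_adj
      tauto
    · tauto
  have hcard : nonDeg (scompl G S) v =
      (G.neighborSet v ∩ S).ncard + (Gᶜ.neighborSet v \ S).ncard := by
    rw [nonDeg, hsplit, ncard_union_eq (disjoint_sdiff_right.mono_left inter_subset_right)]
  have hout : nonDegIn G S v + (Gᶜ.neighborSet v \ S).ncard = nonDeg G v :=
    ncard_inter_add_ncard_sdiff_eq_ncard _ _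
  have := ncard_neighborSet_inter_add G hv
  omega

end Finite

variable [Fintype V]

theorem deg_add_nonDeg (G : SimpleGraph V) (v : V) :
    deg G v + nonDeg G v + 1 = Fintype.card V := by
  simpa [deg, nonDeg, nonDegIn, ← Nat.card_eq_fintype_card] using
    ncard_neighborSet_inter_add G (mem_univ v)

theorem deg_scompl_le (G : SimpleGraph V) {S : Set V} {k : ℕ}
    (hout : ∀ v ∉ S, k ≤ nonDeg G v)
    (hin : ∀ v ∈ S, k + 2 * nonDegIn G S v + 1 ≤ S.ncard + nonDeg G v) (v : V) :
    deg (scompl G S) v ≤ Fintype.card V - 1 - k := by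
  have hk : k ≤ nonDeg (scompl G S) v := by
    by_cases hv : v ∈ S
    · have := nonDeg_scompl_of_mem G hv
      have := hin v hv
      omega
    · exact nonDeg_scompl_of_notMem G hv ▸ hout v hv
  have := deg_add_nonDeg (scompl G S) v
  omega

theorem exists_of_outsideWindow (G : SimpleGraph V) {k j g : ℕ} (hkj : k ≤ j)
    (hg : 2 * k ≤ g + 1) (hlow : (lowSet G k).ncard ≤ k + j)
    (hwin : k + j ≤ (outsideWindow G j g).ncard) :
    ∃ S : Set V, ∀ v, deg (scompl G S) v ≤ Fintype.card V - 1 - k := by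
  obtain ⟨S, hBS, hSW, hS⟩ :=
    exists_subsuperset_card_eq (lowSet_subset_outsideWindow G g hkj) hlow hwin
  refine ⟨S, deg_scompl_le G (fun v hv => not_lt.1 fun h => hv (hBS h)) fun v hv => ?_⟩
  have := nonDegIn_le_nonDeg G S v
  have := ncard_neighborSet_inter_add G hv
  rcases hSW hv with hlo | hhi <;> omega

theorem card_add_ncard_lowSet (G : SimpleGraph V) (j g : ℕ) :
    Fintype.card V + (lowSet G j).ncard =
      (outsideWindow G j g).ncard + (lowSet G (j + g)).ncard := by
  have hsplit : outsideWindow G j g = lowSet G j ∪ (lowSet G (j + g))ᶜ := by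
    ext v
    simp only [outsideWindow, lowSet, mem_union, mem_compl_iff, mem_ofPred_eq]
    omega
  have hdisj : Disjoint (lowSet G j) (lowSet G (j + g))ᶜ :=
    disjoint_compl_right_iff_subset.2 fun v (hv : nonDeg G v < j) => (by omega : nonDeg G v < j + g)
  have := ncard_add_ncard_compl (lowSet G (j + g))
  rw [hsplit, ncard_union_eq hdisj, ← Nat.card_eq_fintype_card]
  omega

theorem card_add_ncard_lowSet_le (G : SimpleGraph V) {k : ℕ}
    (hcrowded : ∀ j, k ≤ j → (lowSet G k).ncard ≤ k + j →
      (outsideWindow G j (2 * k - 1)).ncard < k + j) :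
    Fintype.card V + (lowSet G k).ncard ≤ 6 * k - 3 := by
  have hlow : (lowSet G k).ncard < 2 * k := by
    by_contra! h
    have hj : k ≤ (lowSet G k).ncard - k := by omega
    have := hcrowded _ hj (by omega)
    have := ncard_le_ncard (lowSet_subset_outsideWindow G (2 * k - 1) hj)
    omega
  have h₁ := card_add_ncard_lowSet G k (2 * k - 1)
  have h₂ := card_add_ncard_lowSet G (k + (2 * k - 1)) (2 * k - 1)
  have c₁ := hcrowded k le_rfl (by omega)
  have c₂ := hcrowded (k + (2 * k - 1)) (by omega) (by omega)
  have := ncard_le_card (lowSet G (k + (2 * k - 1) + (2 * k - 1)))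
  rw [Nat.card_eq_fintype_card] at this
  omega

theorem card_le_ncard_completelyJoined (G : SimpleGraph V) {B : Set V} {k : ℕ}
    (hB : ∀ b ∈ B, nonDeg G b < k) :
    Fintype.card V ≤ k * B.ncard + (completelyJoined G B).ncard := by
  classical
  have hcover : (completelyJoined G B)ᶜ ⊆ ⋃ b ∈ B.toFinset, insert b (Gᶜ.neighborSet b) := by
    intro t ht
    simp only [completelyJoined, mem_compl_iff, mem_ofPred_eq, not_and_or, not_not,
      not_forall] at ht
    simp only [mem_iUnion, mem_toFinset, mem_insert_iff, SimpleGraph.mem_neighborSet]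
    rcases ht with ht | ⟨b, hb, hbt⟩
    · exact ⟨t, ht, Or.inl rfl⟩
    · exact ⟨b, hb, Or.inr hbt⟩
  have hcompl : (completelyJoined G B)ᶜ.ncard ≤ k * B.ncard := calc
    _ ≤ ∑ b ∈ B.toFinset, (insert b (Gᶜ.neighborSet b)).ncard :=
      (ncard_le_ncard hcover).trans (Finset.set_ncard_biUnion_le _ _)
    _ ≤ B.toFinset.card • k := Finset.sum_le_card_nsmul _ _ _ fun b hb =>
      (ncard_insert_le _ _).trans (hB b (mem_toFinset.1 hb))
    _ = k * B.ncard := by rw [smul_eq_mul, mul_comm, ncard_eq_toFinset_card']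
  have := ncard_add_ncard_compl (completelyJoined G B)
  rw [Nat.card_eq_fintype_card] at this
  omega

theorem exists_of_completelyJoined (G : SimpleGraph V) {k : ℕ}
    (hk : k ≤ (lowSet G k).ncard + 1) (hjoined : k ≤ (completelyJoined G (lowSet G k)).ncard) :
    ∃ S : Set V, ∀ v, deg (scompl G S) v ≤ Fintype.card V - 1 - k := by
  set B := lowSet G k
  obtain ⟨T, hTF, hT⟩ := exists_subset_card_eq hjoined
  have hBT : Disjoint B T := disjoint_right.2 fun t ht => (hTF ht).1
  have hS : (B ∪ T).ncard = B.ncard + k := by rw [ncard_union_eq hBT, hT]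
  refine ⟨B ∪ T, deg_scompl_le G (fun v hv => not_lt.1 fun h => hv (Or.inl h)) ?_⟩
  rintro v (hv | hv)
  · have hTv : nonDegIn G T v = 0 := nonDegIn_eq_zero G fun t ht => (hTF ht).2 v hv
    have := nonDegIn_union_le G B T v
    have := nonDegIn_le_nonDeg G B v
    have := ncard_neighborSet_inter_add G hv
    omega
  · have hBv : nonDegIn G B v = 0 :=
      nonDegIn_eq_zero G fun b hb hvb => (hTF hv).2 b hb hvb.symm
    have := nonDegIn_union_le G B T v
    have := ncard_neighborSet_inter_add G hv
    have : k ≤ nonDeg G v := not_lt.1 (hTF hv).1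
    omega

end SubgraphCompl

open SubgraphCompl in
theorem stmt5 {V : Type*} [Fintype V] (k : ℕ) (G : SimpleGraph V)
    (hn : Fintype.card V > 2 * k ^ 2 - 2) :
    ∃ S : Set V, ∀ v : V, deg (scompl G S) v ≤ Fintype.card V - 1 - k := by
  rcases le_or_gt (Fintype.card V) 1 with hn1 | hn1
  · exact ⟨∅, fun v => by have := deg_add_nonDeg (scompl G ∅) v; omega⟩
  rcases (lowSet G k).eq_empty_or_nonempty with hB | hB
  · exact ⟨∅, deg_scompl_le G (fun v _ => not_lt.1 fun h => hB.subset h) (by simp)⟩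
  by_cases hwin : ∃ j, k ≤ j ∧ (lowSet G k).ncard ≤ k + j ∧
      k + j ≤ (outsideWindow G j (2 * k - 1)).ncard
  · obtain ⟨j, hkj, hlow, hout⟩ := hwin
    exact exists_of_outsideWindow G hkj (by omega) hlow hout
  push Not at hwin
  have hcount := card_add_ncard_lowSet_le G hwin
  have hjoined := card_le_ncard_completelyJoined G (B := lowSet G k) fun _ hb => hb
  have hB1 := (ncard_pos (s := lowSet G k)).2 hB
  rcases lt_or_ge k 3 with hk | hk
  · apply exists_of_completelyJoined G <;> interval_cases k <;> omega
  · have : 3 * k ≤ k ^ 2 := by nlinarith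
    omega
end

section
/- Let t ≥ 3 be a natural number and let G be a finite simple diamond-free graph that contains an induced K_{1,t}. Let S be an independent set of G such that G ⊕ S is diamond-free and K_{1,t}-free. Let r be the center of any induced K_{1,t} of G and let I be the set of vertices of N(r) that have no neighbor inside N(r). Then S ⊆ I and |S| ≥ |I| - t + 2. -/
section

variable {V : Type*}

section scompl

variable {G : SimpleGraph V} {S : Set V} {x y : V}

lemma scompl_adj_iff_of_notMem_left (hx : x ∉ S) : (scompl G S).Adj x y ↔ G.Adj x y :=
  ⟨fun h => h.2.elim (fun h' => absurd h'.1 hx) And.right,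
    fun h => ⟨h.ne, Or.inr ⟨fun h' => hx h'.1, h⟩⟩⟩

lemma scompl_adj_iff_of_notMem_right (hy : y ∉ S) : (scompl G S).Adj x y ↔ G.Adj x y := by
  rw [SimpleGraph.adj_comm, scompl_adj_iff_of_notMem_left hy, SimpleGraph.adj_comm]

lemma scompl_adj_of_mem (hx : x ∈ S) (hy : y ∈ S) (hxy : x ≠ y) (h : ¬ G.Adj x y) :
    (scompl G S).Adj x y :=
  ⟨hxy, Or.inl ⟨hx, hy, h⟩⟩

end scompl

lemma DiamondFree.adj_of_adj_of_adj {H : SimpleGraph V} (hH : DiamondFree H) {a b c d : V}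
    (hab : a ≠ b) (hac : H.Adj a c) (had : H.Adj a d) (hbc : H.Adj b c) (hbd : H.Adj b d)
    (hcd : H.Adj c d) : H.Adj a b := by
  by_contra hnab
  exact hH a b c d
    ⟨hab, hac.ne, had.ne, hbc.ne, hbd.ne, hcd.ne, hac, had, hbc, hbd, hcd, hnab⟩

lemma StarFree.ncard_lt {H : SimpleGraph V} {t : ℕ} (hH : StarFree H t) {r : V} {A : Set V}
    (hA : A.Finite) (hAr : A ⊆ H.neighborSet r) (hAind : H.IsIndepSet A) : A.ncard < t := by
  by_contra! htA
  have := hA.to_subtype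
  let e : Fin t ↪ A := (Fin.castLEEmb (by rwa [Nat.card_coe_set_eq])).trans
    (Finite.equivFin A).symm.toEmbedding
  refine hH r (fun i => e i) ⟨Subtype.val_injective.comp e.injective, fun i => hAr (e i).2,
    fun i j hij => hAind (e i).2 (e j).2 ?_⟩
  exact fun h => hij (e.injective (Subtype.ext h))

/-- The set `I` of the theorem. -/
def isolatedNeighbors (G : SimpleGraph V) (r : V) : Set V :=
  {x | G.Adj r x ∧ ∀ y, G.Adj r y → ¬ G.Adj x y}

lemma isIndepSet_isolatedNeighbors (G : SimpleGraph V) (r : V) :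
    G.IsIndepSet (isolatedNeighbors G r) :=
  fun _ hx _ hy _ => hx.2 _ hy.1

section subgraphComplement

variable {G : SimpleGraph V} {S : Set V} {t : ℕ} {r : V}
  (hS : ∀ x ∈ S, ∀ y ∈ S, ¬ G.Adj x y)
include hS

lemma exists_two_leaves_mem (hsf : StarFree (scompl G S) t) {f : Fin t → V}
    (hstar : IsStar G t r f) :
    ∃ u v, u ∈ S ∧ v ∈ S ∧ u ≠ v ∧ G.Adj r u ∧ G.Adj r v := by
  obtain ⟨hinj, hadj, hnadj⟩ := hstar
  by_contra! hS2
  refine hsf r f ⟨hinj, fun i => ?_, fun i j hij hfij => ?_⟩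
  · exact ⟨(hadj i).ne, Or.inr ⟨fun h => hS r h.1 (f i) h.2 (hadj i), hadj i⟩⟩
  · rcases hfij.2 with ⟨hi, hj, -⟩ | ⟨-, h⟩
    · exact hS2 (f i) (f j) hi hj (hinj.ne hij) (hadj i) (hadj j)
    · exact hnadj i j hij h

lemma center_adj_of_mem (hdf : DiamondFree (scompl G S)) {u v s : V} (hu : u ∈ S) (hv : v ∈ S)
    (huv : u ≠ v) (hru : G.Adj r u) (hrv : G.Adj r v) (hs : s ∈ S) : G.Adj r s := by
  have hr : r ∉ S := fun h => hS r h u hu hru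
  by_contra hrs
  have hsu : s ≠ u := by rintro rfl; exact hrs hru
  have hsv : s ≠ v := by rintro rfl; exact hrs hrv
  have hsr : (scompl G S).Adj s r :=
    hdf.adj_of_adj_of_adj (ne_of_mem_of_not_mem hs hr)
      (scompl_adj_of_mem hs hu hsu (hS s hs u hu)) (scompl_adj_of_mem hs hv hsv (hS s hs v hv))
      ((scompl_adj_iff_of_notMem_left hr).2 hru) ((scompl_adj_iff_of_notMem_left hr).2 hrv)
      (scompl_adj_of_mem hu hv huv (hS u hu v hv))
  exact hrs ((scompl_adj_iff_of_notMem_right hr).1 hsr).symm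

lemma not_adj_neighbor_of_mem (hGdf : DiamondFree G) (hdf : DiamondFree (scompl G S))
    {s g y : V} (hs : s ∈ S) (hg : g ∈ S) (hgs : g ≠ s) (hrs : G.Adj r s) (hrg : G.Adj r g)
    (hry : G.Adj r y) : ¬ G.Adj s y := by
  intro hsy
  have hy : y ∉ S := fun h => hS s hs y h hsy
  have hr : r ∉ S := fun h => hS r h s hs hrs
  have hyg : G.Adj y g := (scompl_adj_iff_of_notMem_left hy).1 <|
    hdf.adj_of_adj_of_adj (ne_of_mem_of_not_mem hg hy).symm
      ((scompl_adj_iff_of_notMem_left hy).2 hry.symm)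
      ((scompl_adj_iff_of_notMem_left hy).2 hsy.symm)
      ((scompl_adj_iff_of_notMem_right hr).2 hrg.symm)
      (scompl_adj_of_mem hg hs hgs (hS g hg s hs))
      ((scompl_adj_iff_of_notMem_left hr).2 hrs)
  exact hS g hg s hs (hGdf.adj_of_adj_of_adj hgs hyg.symm hrg.symm hsy hrs.symm hry.symm)

lemma subset_isolatedNeighbors (hGdf : DiamondFree G) (hdf : DiamondFree (scompl G S))
    (hsf : StarFree (scompl G S) t) {f : Fin t → V} (hstar : IsStar G t r f) :
    S ⊆ isolatedNeighbors G r := by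
  obtain ⟨u, v, hu, hv, huv, hru, hrv⟩ := exists_two_leaves_mem hS hsf hstar
  intro s hs
  have hrs := center_adj_of_mem hS hdf hu hv huv hru hrv hs
  refine ⟨hrs, fun y hry => ?_⟩
  obtain ⟨g, hg, hgs, hrg⟩ : ∃ g ∈ S, g ≠ s ∧ G.Adj r g := by
    by_cases hus : u = s
    · exact ⟨v, hv, fun hvs => huv (hus.trans hvs.symm), hrv⟩
    · exact ⟨u, hu, hus, hru⟩
  exact not_adj_neighbor_of_mem hS hGdf hdf hs hg hgs hrs hrg hry

end subgraphComplement

lemma ncard_isolatedNeighbors_diff_add_one_lt [Finite V] {G : SimpleGraph V} {S : Set V} {t : ℕ}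
    {r u : V} (hsf : StarFree (scompl G S) t) (hSI : S ⊆ isolatedNeighbors G r) (hu : u ∈ S) :
    (isolatedNeighbors G r \ S).ncard + 1 < t := by
  set I := isolatedNeighbors G r
  have hr : r ∉ S := fun h => (hSI h).1.ne rfl
  set A := insert u (I \ S)
  have hAI : A ⊆ I := Set.insert_subset (hSI hu) Set.sdiff_subset
  have hAS : ∀ x ∈ A, x ∈ S → x = u := by
    rintro x (rfl | hx) hxS
    · rfl
    · exact absurd hxS hx.2
  have hAr : A ⊆ (scompl G S).neighborSet r :=
    fun x hx => (scompl_adj_iff_of_notMem_left hr).2 (hAI hx).1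
  have hAind : (scompl G S).IsIndepSet A := by
    intro x hx y hy hxy hadj
    have hGxy : G.Adj x y := by
      by_cases hxS : x ∈ S
      · have hyS : y ∉ S := fun hyS => hxy ((hAS x hx hxS).trans (hAS y hy hyS).symm)
        exact (scompl_adj_iff_of_notMem_right hyS).1 hadj
      · exact (scompl_adj_iff_of_notMem_left hxS).1 hadj
    exact isIndepSet_isolatedNeighbors G r (hAI hx) (hAI hy) hxy hGxy
  have hcard := hsf.ncard_lt (Set.toFinite A) hAr hAind
  rwa [Set.ncard_insert_of_notMem (fun h => h.2 hu)] at hcard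

end

theorem stmt9_general {V : Type*} [Fintype V] (t : ℕ) (G : SimpleGraph V)
    (hGdf : DiamondFree G)
    (S : Set V) (hind : ∀ x ∈ S, ∀ y ∈ S, ¬ G.Adj x y)
    (hdf : DiamondFree (scompl G S)) (hsf : StarFree (scompl G S) t)
    (r : V) (f : Fin t → V) (hstar : IsStar G t r f)
    (I : Set V) (hI : I = {x : V | G.Adj r x ∧ ∀ y : V, G.Adj r y → ¬ G.Adj x y}) :
    S ⊆ I ∧ (I.ncard : ℤ) - t + 2 ≤ (S.ncard : ℤ) := by
  change I = isolatedNeighbors G r at hI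
  subst hI
  have hSI := subset_isolatedNeighbors hind hGdf hdf hsf hstar
  obtain ⟨u, -, hu, -⟩ := exists_two_leaves_mem hind hsf hstar
  have hlt := ncard_isolatedNeighbors_diff_add_one_lt hsf hSI hu
  have hsplit := Set.ncard_sdiff_add_ncard_of_subset hSI
  exact ⟨hSI, by omega⟩

theorem stmt9 {V : Type*} [Fintype V] (t : ℕ) (ht : 3 ≤ t) (G : SimpleGraph V)
    (hGdf : DiamondFree G)
    (S : Set V) (hind : ∀ x ∈ S, ∀ y ∈ S, ¬ G.Adj x y)
    (hdf : DiamondFree (scompl G S)) (hsf : StarFree (scompl G S) t)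
    (r : V) (f : Fin t → V) (hstar : IsStar G t r f)
    (I : Set V) (hI : I = {x : V | G.Adj r x ∧ ∀ y : V, G.Adj r y → ¬ G.Adj x y}) :
    S ⊆ I ∧ (I.ncard : ℤ) - t + 2 ≤ (S.ncard : ℤ) :=
  stmt9_general t G hGdf S hind hdf hsf r f hstar I hI
end

section
/- Let t ≥ 1 be a natural number, let G be a finite simple graph, and let S be an independent set of G such that G ⊕ S is K_{1,t}-free. If r is the center of an induced K_{1,t} of G, then r ∉ S. -/
theorem scompl_adj_iff_of_right_not_mem {V : Type*} {G : SimpleGraph V} {S : Set V} {x y : V}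
    (hy : y ∉ S) : (scompl G S).Adj x y ↔ G.Adj x y := by
  refine ⟨fun h => ?_, fun h => ⟨h.ne, Or.inr ⟨fun hxy => hy hxy.2, h⟩⟩⟩
  rcases h.2 with ⟨-, hyS, -⟩ | ⟨-, hadj⟩
  · exact absurd hyS hy
  · exact hadj

theorem IsStar.scompl_of_leaves_not_mem {V : Type*} {G : SimpleGraph V} {S : Set V} {t : ℕ}
    {r : V} {f : Fin t → V} (h : IsStar G t r f) (hf : ∀ i, f i ∉ S) :
    IsStar (scompl G S) t r f :=
  ⟨h.1, fun i => (scompl_adj_iff_of_right_not_mem (hf i)).2 (h.2.1 i),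
    fun i j hij => (scompl_adj_iff_of_right_not_mem (hf j)).not.2 (h.2.2 i j hij)⟩

theorem stmt10_general {V : Type*} (t : ℕ) (G : SimpleGraph V)
    (S : Set V) (hind : ∀ x ∈ S, ∀ y ∈ S, ¬ G.Adj x y)
    (hsf : StarFree (scompl G S) t)
    (r : V) (f : Fin t → V) (hstar : IsStar G t r f) :
    r ∉ S := by
  intro hr
  have hleaves : ∀ i, f i ∉ S := fun i hi => hind r hr (f i) hi (hstar.2.1 i)
  exact hsf r f (hstar.scompl_of_leaves_not_mem hleaves)

theorem stmt10 {V : Type*} [Fintype V] (t : ℕ) (ht : 1 ≤ t) (G : SimpleGraph V)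
    (S : Set V) (hind : ∀ x ∈ S, ∀ y ∈ S, ¬ G.Adj x y)
    (hsf : StarFree (scompl G S) t)
    (r : V) (f : Fin t → V) (hstar : IsStar G t r f) :
    r ∉ S :=
  stmt10_general t G S hind hsf r f hstar
end

section
/- Let G be a finite simple graph, let S be a set of vertices of G, and let u, v ∈ S be two distinct vertices adjacent in G. Suppose G ⊕ S is diamond-free. Then the set S ∩ (V \ (N[u] ∪ N[v])) of vertices of S adjacent to neither u nor v is a clique of G (pairwise adjacent vertices). -/
theorem scompl_adj_iff_of_mem {V : Type*} {G : SimpleGraph V} {S : Set V} {x y : V}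
    (hx : x ∈ S) (hy : y ∈ S) : (scompl G S).Adj x y ↔ x ≠ y ∧ ¬ G.Adj x y := by
  simp [scompl, hx, hy]

theorem isDiamond_scompl {V : Type*} {G : SimpleGraph V} {S : Set V} {u v x y : V}
    (hu : u ∈ S) (hv : v ∈ S) (hx : x ∈ S) (hy : y ∈ S)
    (hxu : x ≠ u) (hxv : x ≠ v) (hyu : y ≠ u) (hyv : y ≠ v) (hxy : x ≠ y)
    (huv : G.Adj u v) (hux : ¬ G.Adj u x) (huy : ¬ G.Adj u y) (hvx : ¬ G.Adj v x)
    (hvy : ¬ G.Adj v y) (hnxy : ¬ G.Adj x y) :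
    IsDiamond (scompl G S) u v x y :=
  ⟨huv.ne, hxu.symm, hyu.symm, hxv.symm, hyv.symm, hxy,
    (scompl_adj_iff_of_mem hu hx).2 ⟨hxu.symm, hux⟩,
    (scompl_adj_iff_of_mem hu hy).2 ⟨hyu.symm, huy⟩,
    (scompl_adj_iff_of_mem hv hx).2 ⟨hxv.symm, hvx⟩,
    (scompl_adj_iff_of_mem hv hy).2 ⟨hyv.symm, hvy⟩,
    (scompl_adj_iff_of_mem hx hy).2 ⟨hxy, hnxy⟩,
    fun h => ((scompl_adj_iff_of_mem hu hv).1 h).2 huv⟩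

theorem stmt14_general {V : Type*} (G : SimpleGraph V)
    (S : Set V) (u v : V) (hu : u ∈ S) (hv : v ∈ S) (huv : G.Adj u v)
    (hdf : DiamondFree (scompl G S))
    (A : Set V) (hA : A = {x : V | x ∈ S ∧ x ≠ u ∧ x ≠ v ∧ ¬ G.Adj u x ∧ ¬ G.Adj v x}) :
    ∀ x ∈ A, ∀ y ∈ A, x ≠ y → G.Adj x y := by
  subst hA
  rintro x ⟨hx, hxu, hxv, hux, hvx⟩ y ⟨hy, hyu, hyv, huy, hvy⟩ hxy
  by_contra hnxy
  exact hdf u v x y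
    (isDiamond_scompl hu hv hx hy hxu hxv hyu hyv hxy huv hux huy hvx hvy hnxy)

theorem stmt14 {V : Type*} [Fintype V] (G : SimpleGraph V)
    (S : Set V) (u v : V) (hu : u ∈ S) (hv : v ∈ S) (huv : G.Adj u v)
    (hdf : DiamondFree (scompl G S))
    (A : Set V) (hA : A = {x : V | x ∈ S ∧ x ≠ u ∧ x ≠ v ∧ ¬ G.Adj u x ∧ ¬ G.Adj v x}) :
    ∀ x ∈ A, ∀ y ∈ A, x ≠ y → G.Adj x y :=
  stmt14_general G S u v hu hv huv hdf A hA
end
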